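/- Let k ∈ ℝ, k ≠ 0, and set θ(x, y, t) = k(2x + 2y + k²t)/2. Define q(x, y, t) = u₁(x, y, t) = u₂(x, y, t) = 2k²·e^{θ}/(1 + e^{θ})². Then the one-soliton identity 4q_t = −q_{xxx} + 3q_{xyy} + 3(q u₁)_x + 3(q u₂)_y holds identically on ℝ³. -/

import Mathlib

/-!
The soliton is a plane wave `q = Q (k x + k y + k³ t / 2)` with `Q = 2 k² S` and
`S u = eᵘ / (1 + eᵘ)²`, so the equation collapses to the travelling-wave ODE of KdV,
`S' = S‴ + 6 (S²)'`. Since `S = σ (1 - σ)` for the logistic sigmoid `σ`, and `σ' = σ (1 - σ)`,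
every derivative of a polynomial in `σ` is again a polynomial in `σ`, and the ODE becomes a
polynomial identity.
-/

open Real Polynomial

/-- Partial derivative in `x` for a real function `f(x, y, t)`. -/
noncomputable def rdx (f : ℝ → ℝ → ℝ → ℝ) : ℝ → ℝ → ℝ → ℝ :=
  fun x y t => deriv (fun x' => f x' y t) x

/-- Partial derivative in `y`. -/
noncomputable def rdy (f : ℝ → ℝ → ℝ → ℝ) : ℝ → ℝ → ℝ → ℝ :=
  fun x y t => deriv (fun y' => f x y' t) y

/-- Partial derivative in `t`. -/
noncomputable def rdt (f : ℝ → ℝ → ℝ → ℝ) : ℝ → ℝ → ℝ → ℝ :=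
  fun x y t => deriv (fun t' => f x y t') t

-- No differentiability of `G` is needed: `deriv` commutes with affine reparametrisation.
theorem deriv_comp_mul_add (G : ℝ → ℝ) (a d x : ℝ) :
    deriv (fun x => G (a * x + d)) x = a * deriv G (a * x + d) := by
  rw [deriv_comp_mul_left a (fun z => G (z + d)) x, deriv_comp_add_const, smul_eq_mul]

def planeWave (G : ℝ → ℝ) (a b c : ℝ) : ℝ → ℝ → ℝ → ℝ :=
  fun x y t => G (a * x + b * y + c * t)

section planeWave

variable (G : ℝ → ℝ) (a b c : ℝ)

theorem rdx_planeWave : rdx (planeWave G a b c) = planeWave (fun u => a * deriv G u) a b c := by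
  funext x y t
  simp only [rdx, planeWave, add_assoc]
  exact deriv_comp_mul_add G a (b * y + c * t) x

theorem rdy_planeWave : rdy (planeWave G a b c) = planeWave (fun u => b * deriv G u) a b c := by
  funext x y t
  simp only [rdy, planeWave]
  convert deriv_comp_mul_add G b (a * x + c * t) y using 2 <;> ring_nf

theorem rdt_planeWave : rdt (planeWave G a b c) = planeWave (fun u => c * deriv G u) a b c := by
  funext x y t
  simp only [rdt, planeWave]
  convert deriv_comp_mul_add G c (a * x + b * y) t using 2 <;> ring_nf

end planeWave

theorem deriv_eval_sigmoid (p : ℝ[X]) :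
    deriv (fun u => p.eval (sigmoid u)) =
      fun u => (derivative p * (X - X ^ 2)).eval (sigmoid u) := by
  funext u
  have h := ((p.hasDerivAt (sigmoid u)).comp u (hasDerivAt_sigmoid u)).deriv
  simp only [Function.comp_def] at h
  rw [h]
  simp only [eval_mul, eval_sub, eval_X, eval_pow]
  ring

noncomputable def solitonProfile (u : ℝ) : ℝ := exp u / (1 + exp u) ^ 2

theorem solitonProfile_eq_eval_sigmoid :
    solitonProfile = fun u => (X - X ^ 2 : ℝ[X]).eval (sigmoid u) := by
  funext u
  rw [solitonProfile, sigmoid_def, exp_neg]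
  simp only [eval_sub, eval_X, eval_pow]
  field_simp
  ring

theorem solitonProfile_kdv (u : ℝ) :
    deriv solitonProfile u = deriv (deriv (deriv solitonProfile)) u
      + 6 * deriv (fun u => solitonProfile u * solitonProfile u) u := by
  simp only [solitonProfile_eq_eval_sigmoid, ← eval_mul, deriv_eval_sigmoid]
  simp only [derivative_mul, derivative_sub, derivative_zero, derivative_one, derivative_X,
    derivative_X_pow_succ, Nat.cast_one, map_add, map_one, pow_one, eval_mul, eval_add,
    eval_sub, eval_zero, eval_one, eval_X, eval_pow]
  ring

theorem statement11_general (k : ℝ)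
    (θ : ℝ → ℝ → ℝ → ℝ) (hθ : θ = fun x y t => k * (2 * x + 2 * y + k ^ 2 * t) / 2)
    (q u₁ u₂ : ℝ → ℝ → ℝ → ℝ)
    (hq : q = fun x y t => 2 * k ^ 2 * Real.exp (θ x y t) / (1 + Real.exp (θ x y t)) ^ 2)
    (hu₁ : u₁ = q) (hu₂ : u₂ = q) :
    ∀ x y t, 4 * rdt q x y t
        = - rdx (rdx (rdx q)) x y t + 3 * rdx (rdy (rdy q)) x y t
          + 3 * rdx (fun x y t => q x y t * u₁ x y t) x y t
          + 3 * rdy (fun x y t => q x y t * u₂ x y t) x y t := by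
  subst u₁ u₂
  have hq_wave : q = planeWave (fun u => 2 * k ^ 2 * solitonProfile u) k k (k ^ 3 / 2) := by
    subst hq hθ
    funext x y t
    simp only [planeWave, solitonProfile]
    ring_nf
  have hqq_wave : (fun x y t => q x y t * q x y t) = planeWave
      (fun u => (2 * k ^ 2) ^ 2 * (solitonProfile u * solitonProfile u)) k k (k ^ 3 / 2) := by
    funext x y t
    simp only [hq_wave, planeWave]
    ring
  intro x y t
  rw [hqq_wave, hq_wave]
  simp only [rdx_planeWave, rdy_planeWave, rdt_planeWave, deriv_const_mul_field', planeWave]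
  linear_combination (4 * k ^ 5) * solitonProfile_kdv (k * x + k * y + k ^ 3 / 2 * t)

/-- Hirota's one-soliton `q = u₁ = u₂ = 2k²e^θ/(1+e^θ)²` with
`θ = k(2x + 2y + k²t)/2` solves the zero-energy Novikov–Veselov equation. -/
theorem statement11 (k : ℝ) (hk : k ≠ 0)
    (θ : ℝ → ℝ → ℝ → ℝ) (hθ : θ = fun x y t => k * (2 * x + 2 * y + k ^ 2 * t) / 2)
    (q u₁ u₂ : ℝ → ℝ → ℝ → ℝ)
    (hq : q = fun x y t => 2 * k ^ 2 * Real.exp (θ x y t) / (1 + Real.exp (θ x y t)) ^ 2)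
    (hu₁ : u₁ = q) (hu₂ : u₂ = q) :
    ∀ x y t, 4 * rdt q x y t
        = - rdx (rdx (rdx q)) x y t + 3 * rdx (rdy (rdy q)) x y t
          + 3 * rdx (fun x y t => q x y t * u₁ x y t) x y t
          + 3 * rdy (fun x y t => q x y t * u₂ x y t) x y t :=
  statement11_general k θ hθ q u₁ u₂ hq hu₁ hu₂
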